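/- Let (K, K^∨) be a pair of dual reflexive Gorenstein cones of index k with deg^∨ = (1/2)(s_1 + ⋯ + s_{2r}) + t_1 + ⋯ + t_{k−r}, where the s_i, t_j ∈ K^∨_(1) are linearly independent. Then for every nonzero vector v ∈ ℝ^d with ⟨v, s_i⟩ = 0 for all i and ⟨v, t_j⟩ = 0 for all j, there exist n_+, n_− ∈ K^∨_(1) with ⟨v, n_+⟩ > 0 and ⟨v, n_−⟩ < 0. (Equivalently, the origin lies in the interior of the image Θ of the convex hull of K^∨_(1) in the quotient of ℝ^d by the span of the s_i and t_j.) -/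

import Mathlib

/-!
A Gorenstein cone `K` with degree element `deg^∨` is generated by vectors pairing to `1` with
`deg^∨`, so `deg^∨` lies in the interior of `K^∨`. A vector `v` which is nonpositive on the
generators of `K^∨` (which lie in `K^∨_(1)`), and hence on all of `K^∨`, while vanishing at the
interior point `deg^∨`, must vanish identically. The decomposition of `deg^∨` shows that
`⟨v, deg^∨⟩ = 0` whenever `v` is orthogonal to all `s_i` and `t_j`; applying this to `v` and `-v`
gives `n₊` and `n₋`.
-/

open scoped BigOperators Pointwise

noncomputable section

/-- The standard pairing `⟨x, y⟩ = ∑ i, x i * y i` on `ℝ^d`. -/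
def pairR {d : ℕ} (x y : Fin d → ℝ) : ℝ := ∑ i, x i * y i

/-- A point of `ℝ^d` is a lattice point if all of its coordinates are integers. -/
def IsLatticePoint {d : ℕ} (x : Fin d → ℝ) : Prop := ∀ i, ∃ z : ℤ, x i = (z : ℝ)

/-- The dual cone `K^∨ = {y : ⟨x, y⟩ ≥ 0 for all x ∈ K}`. -/
def dualCone {d : ℕ} (K : Set (Fin d → ℝ)) : Set (Fin d → ℝ) :=
  { y | ∀ x ∈ K, 0 ≤ pairR x y }

/-- A Gorenstein cone with degree element `n` (a lattice point): the set of all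
nonnegative real linear combinations of a finite set of lattice points, each pairing
to `1` with `n`, such that `K ∩ (−K) = {0}` and `span K = ℝ^d`. -/
def IsGorensteinCone {d : ℕ} (K : Set (Fin d → ℝ)) (n : Fin d → ℝ) : Prop :=
  IsLatticePoint n ∧
  (∃ S : Finset (Fin d → ℝ),
      (∀ v ∈ S, IsLatticePoint v ∧ pairR v n = 1) ∧
      K = { x | ∃ c : (Fin d → ℝ) → ℝ, (∀ v, 0 ≤ c v) ∧ x = ∑ v ∈ S, c v • v }) ∧
  K ∩ (-K) = {0} ∧
  Submodule.span ℝ K = ⊤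

/-- `K_(1)`: the lattice points `m ∈ K` with `⟨m, deg^∨⟩ = 1`. -/
def Kone {d : ℕ} (K : Set (Fin d → ℝ)) (degVee : Fin d → ℝ) : Set (Fin d → ℝ) :=
  { m | IsLatticePoint m ∧ m ∈ K ∧ pairR m degVee = 1 }

/-- `K^∨_(1)`: the lattice points `n ∈ K^∨` with `⟨deg, n⟩ = 1`. -/
def KvOne {d : ℕ} (K : Set (Fin d → ℝ)) (deg : Fin d → ℝ) : Set (Fin d → ℝ) :=
  { n | IsLatticePoint n ∧ n ∈ dualCone K ∧ pairR deg n = 1 }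

open Matrix

section

def finiteCone {d : ℕ} (S : Finset (Fin d → ℝ)) : Set (Fin d → ℝ) :=
  { x | ∃ c : (Fin d → ℝ) → ℝ, (∀ v, 0 ≤ c v) ∧ x = ∑ v ∈ S, c v • v }

variable {d : ℕ}

lemma pairR_eq_dotProduct (x y : Fin d → ℝ) : pairR x y = x ⬝ᵥ y := rfl

lemma pairR_neg_left (x y : Fin d → ℝ) : pairR (-x) y = -pairR x y := neg_dotProduct x y

lemma mem_finiteCone_of_mem {S : Finset (Fin d → ℝ)} {n : Fin d → ℝ} (hn : n ∈ S) :
    n ∈ finiteCone S := by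
  classical
  refine ⟨fun w => if w = n then 1 else 0, fun w => by positivity, ?_⟩
  rw [Finset.sum_eq_single n (fun b _ hb => by simp [hb]) (fun h => absurd hn h)]
  simp

lemma mem_dualCone_finiteCone {S : Finset (Fin d → ℝ)} {u : Fin d → ℝ}
    (hu : ∀ m ∈ S, 0 ≤ pairR m u) : u ∈ dualCone (finiteCone S) := by
  rintro _ ⟨c, hc, rfl⟩
  simp only [pairR_eq_dotProduct] at hu ⊢
  rw [dotProduct_comm, dotProduct_sum]
  refine Finset.sum_nonneg fun m hm => ?_
  rw [dotProduct_smul, smul_eq_mul, dotProduct_comm]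
  exact mul_nonneg (hc m) (hu m hm)

/-- A vector pairing to `1` with every generator of `K` is an interior point of `K^∨`. -/
lemma exists_add_smul_mem_dualCone_finiteCone {S : Finset (Fin d → ℝ)} {δ : Fin d → ℝ}
    (hδ : ∀ m ∈ S, pairR m δ = 1) (w : Fin d → ℝ) :
    ∃ ε : ℝ, 0 < ε ∧ δ + ε • w ∈ dualCone (finiteCone S) := by
  set M : ℝ := ∑ m ∈ S, |pairR m w|
  have hM : 0 ≤ M := Finset.sum_nonneg fun m _ => abs_nonneg _
  refine ⟨(1 + M)⁻¹, by positivity, mem_dualCone_finiteCone fun m hm => ?_⟩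
  have hmM : |pairR m w| ≤ M :=
    Finset.single_le_sum (f := fun m => |pairR m w|) (fun _ _ => abs_nonneg _) hm
  have hεM : (1 + M)⁻¹ * M ≤ 1 := by
    rw [inv_mul_le_iff₀ (by positivity)]
    linarith
  have hpair : pairR m (δ + (1 + M)⁻¹ • w) = 1 + (1 + M)⁻¹ * pairR m w := by
    simp only [pairR_eq_dotProduct] at hδ ⊢
    rw [dotProduct_add, dotProduct_smul, smul_eq_mul, hδ m hm]
  rw [hpair]
  nlinarith [neg_abs_le (pairR m w), inv_nonneg.2 (by positivity : (0 : ℝ) ≤ 1 + M)]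

lemma eq_zero_of_forall_pairR_nonneg {u : Fin d → ℝ} (hu : ∀ w, 0 ≤ pairR u w) : u = 0 := by
  have hneg := hu (-u)
  rw [pairR_eq_dotProduct, dotProduct_neg, neg_nonneg] at hneg
  exact dotProduct_self_eq_zero.1 (le_antisymm hneg (dotProduct_self_star_nonneg u))

lemma eq_zero_of_mem_dualCone_dualCone_finiteCone {S : Finset (Fin d → ℝ)} {δ u : Fin d → ℝ}
    (hδ : ∀ m ∈ S, pairR m δ = 1) (hu : u ∈ dualCone (dualCone (finiteCone S)))
    (huδ : pairR u δ = 0) : u = 0 := by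
  refine eq_zero_of_forall_pairR_nonneg fun w => ?_
  obtain ⟨ε, hε, hmem⟩ := exists_add_smul_mem_dualCone_finiteCone hδ w
  have h := hu _ hmem
  rw [pairR_eq_dotProduct] at h huδ ⊢
  rw [dotProduct_comm, dotProduct_add, dotProduct_smul, smul_eq_mul, huδ, zero_add] at h
  exact nonneg_of_mul_nonneg_right h hε

lemma exists_mem_KvOne_pairR_pos {K : Set (Fin d → ℝ)} {deg degVee : Fin d → ℝ}
    (hK : IsGorensteinCone K degVee) (hKv : IsGorensteinCone (dualCone K) deg)
    {u : Fin d → ℝ} (hu : u ≠ 0) (huδ : pairR u degVee = 0) :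
    ∃ n ∈ KvOne K deg, 0 < pairR u n := by
  obtain ⟨-, ⟨S, hS, hKS⟩, -⟩ := hK
  obtain ⟨-, ⟨S', hS', hKvS'⟩, -⟩ := hKv
  change K = finiteCone S at hKS
  change dualCone K = finiteCone S' at hKvS'
  have hS'KvOne : ∀ n ∈ S', n ∈ KvOne K deg := fun n hn =>
    ⟨(hS' n hn).1, hKvS' ▸ mem_finiteCone_of_mem hn,
      by rw [pairR_eq_dotProduct, dotProduct_comm]; exact (hS' n hn).2⟩
  by_contra! hnonpos
  refine hu (neg_eq_zero.1 (eq_zero_of_mem_dualCone_dualCone_finiteCone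
    (S := S) (fun m hm => (hS m hm).2) ?_ ?_))
  · rw [← hKS, hKvS']
    refine mem_dualCone_finiteCone fun n hn => ?_
    rw [pairR_eq_dotProduct, dotProduct_neg, dotProduct_comm, neg_nonneg]
    exact hnonpos n (hS'KvOne n hn)
  · rw [pairR_neg_left, huδ, neg_zero]

end

theorem stmt13_general {d k r : ℕ} (K : Set (Fin d → ℝ)) (deg degVee : Fin d → ℝ)
    (hK : IsGorensteinCone K degVee) (hKv : IsGorensteinCone (dualCone K) deg)
    (s : Fin (2 * r) → (Fin d → ℝ)) (t : Fin (k - r) → (Fin d → ℝ))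
    (hdec : degVee = (2⁻¹ : ℝ) • (∑ i, s i) + ∑ j, t j)
    (v : Fin d → ℝ) (hv : v ≠ 0)
    (hvs : ∀ i, pairR v (s i) = 0) (hvt : ∀ j, pairR v (t j) = 0) :
    (∃ n ∈ KvOne K deg, 0 < pairR v n) ∧ (∃ n ∈ KvOne K deg, pairR v n < 0) := by
  have hvdeg : pairR v degVee = 0 := by
    simp only [pairR_eq_dotProduct] at hvs hvt ⊢
    simp [hdec, dotProduct_add, dotProduct_smul, dotProduct_sum, hvs, hvt]
  refine ⟨exists_mem_KvOne_pairR_pos hK hKv hv hvdeg, ?_⟩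
  obtain ⟨n, hn, hpos⟩ := exists_mem_KvOne_pairR_pos hK hKv (neg_ne_zero.2 hv)
    (by rw [pairR_neg_left, hvdeg, neg_zero])
  exact ⟨n, hn, by rwa [pairR_neg_left, neg_pos] at hpos⟩

/-- Suppose `deg^∨ = (1/2)(s_1 + ⋯ + s_{2r}) + t_1 + ⋯ + t_{k−r}` with
the `s_i, t_j ∈ K^∨_(1)` linearly independent. Then for every nonzero `v ∈ ℝ^d` with
`⟨v, s_i⟩ = 0` and `⟨v, t_j⟩ = 0` for all `i, j`, there are `n₊, n₋ ∈ K^∨_(1)` with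
`⟨v, n₊⟩ > 0` and `⟨v, n₋⟩ < 0`. -/
theorem stmt13 {d k r : ℕ} (hrk : r ≤ k) (K : Set (Fin d → ℝ)) (deg degVee : Fin d → ℝ)
    (hK : IsGorensteinCone K degVee) (hKv : IsGorensteinCone (dualCone K) deg)
    (hk : pairR deg degVee = (k : ℝ))
    (s : Fin (2 * r) → (Fin d → ℝ)) (t : Fin (k - r) → (Fin d → ℝ))
    (hs : ∀ i, s i ∈ KvOne K deg) (ht : ∀ j, t j ∈ KvOne K deg)
    (hli : LinearIndependent ℝ (Sum.elim s t))
    (hdec : degVee = (2⁻¹ : ℝ) • (∑ i, s i) + ∑ j, t j)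
    (v : Fin d → ℝ) (hv : v ≠ 0)
    (hvs : ∀ i, pairR v (s i) = 0) (hvt : ∀ j, pairR v (t j) = 0) :
    (∃ n ∈ KvOne K deg, 0 < pairR v n) ∧ (∃ n ∈ KvOne K deg, pairR v n < 0) :=
  stmt13_general K deg degVee hK hKv s t hdec v hv hvs hvt
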